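/- Fix 1 ≤ t ≤ T, and suppose x_t ∈ X minimizes ∑_{τ=1}^{t−1} ℓ_τ(x) over x ∈ X and x_{t+1} ∈ X minimizes ∑_{τ=1}^{t} ℓ_τ(x) over x ∈ X. Then ℓ_t(x_t) − ℓ_t(x_{t+1}) ≥ (α/2)·(2t − 1)·‖x_t − x_{t+1}‖². -/

import Mathlib

/-!
Let `F_n = ∑_{τ ≤ n} ℓ_τ`, which is `nα`-strongly convex. A minimizer `x` of an `m`-strongly
convex function `f` on a convex set has quadratic growth `f x + m/2 ‖y - x‖² ≤ f y`. Applying this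
to `F_{t-1}` at `x_t` and to `F_t = F_{t-1} + ℓ_t` at `x_{t+1}` and adding, the values of `F_{t-1}`
cancel and the moduli `(t-1)α` and `tα` add up to `(2t-1)α`.
-/

open Finset Filter Topology

variable {E : Type*} [NormedAddCommGroup E] [NormedSpace ℝ E] {s : Set E} {m : ℝ}

lemma StrongConvexOn.sum {ι : Type*} {u : Finset ι} {f : ι → E → ℝ} (hs : Convex ℝ s)
    (hf : ∀ i ∈ u, StrongConvexOn s m (f i)) :
    StrongConvexOn s (#u * m) fun x ↦ ∑ i ∈ u, f i x := by
  refine ⟨hs, fun x hx y hy a b ha hb hab ↦ ?_⟩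
  calc ∑ i ∈ u, f i (a • x + b • y)
      ≤ ∑ i ∈ u, (a • f i x + b • f i y - a * b * (m / 2 * ‖x - y‖ ^ 2)) :=
        sum_le_sum fun i hi ↦ (hf i hi).2 hx hy ha hb hab
    _ = a • ∑ i ∈ u, f i x + b • ∑ i ∈ u, f i y - a * b * (#u * m / 2 * ‖x - y‖ ^ 2) := by
        simp only [smul_eq_mul, sum_sub_distrib, sum_add_distrib, ← mul_sum, sum_const,
          nsmul_eq_mul]
        ring

lemma StrongConvexOn.quadratic_growth_of_isMinOn {f : E → ℝ} (hf : StrongConvexOn s m f)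
    {x : E} (hx : x ∈ s) (hmin : IsMinOn f s x) {y : E} (hy : y ∈ s) :
    f x + m / 2 * ‖y - x‖ ^ 2 ≤ f y := by
  -- Minimality at `x` versus strong convexity at `a • y + (1 - a) • x`; then let `a → 0⁺`.
  have along_segment : ∀ a ∈ Set.Ioo (0 : ℝ) 1, f x + (1 - a) * (m / 2 * ‖y - x‖ ^ 2) ≤ f y := by
    rintro a ⟨ha0, ha1⟩
    have hmid := hf.2 hy hx ha0.le (by linarith) (add_sub_cancel a 1)
    have hle := isMinOn_iff.1 hmin _ (hf.1 hy hx ha0.le (by linarith) (add_sub_cancel a 1))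
    rw [smul_eq_mul, smul_eq_mul] at hmid
    refine le_of_mul_le_mul_left ?_ ha0
    linear_combination hle + hmid
  have hlim : Tendsto (fun a : ℝ ↦ f x + (1 - a) * (m / 2 * ‖y - x‖ ^ 2)) (𝓝[>] 0)
      (𝓝 (f x + m / 2 * ‖y - x‖ ^ 2)) :=
    tendsto_nhdsWithin_of_tendsto_nhds <| (by fun_prop : Continuous _).tendsto' _ _ (by simp)
  exact le_of_tendsto hlim (eventually_of_mem (Ioo_mem_nhdsGT one_pos) along_segment)

theorem ftl_strong_convexity_gap_general
    {d : ℕ} (X : Set (EuclideanSpace ℝ (Fin d)))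
    (hXconv : Convex ℝ X)
    (α : ℝ)
    (T : ℕ) (ℓ : ℕ → EuclideanSpace ℝ (Fin d) → ℝ)
    (hsc : ∀ τ ∈ Finset.Icc 1 T, StrongConvexOn X α (ℓ τ))
    (t : ℕ) (ht1 : 1 ≤ t) (htT : t ≤ T)
    (xt xt1 : EuclideanSpace ℝ (Fin d)) (hxt : xt ∈ X) (hxt1 : xt1 ∈ X)
    (hxtmin : ∀ y ∈ X, ∑ τ ∈ Finset.Icc 1 (t - 1), ℓ τ xt ≤ ∑ τ ∈ Finset.Icc 1 (t - 1), ℓ τ y)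
    (hxt1min : ∀ y ∈ X, ∑ τ ∈ Finset.Icc 1 t, ℓ τ xt1 ≤ ∑ τ ∈ Finset.Icc 1 t, ℓ τ y) :
    α / 2 * (2 * (t : ℝ) - 1) * ‖xt - xt1‖ ^ 2 ≤ ℓ t xt - ℓ t xt1 := by
  obtain ⟨n, rfl⟩ : ∃ n, t = n + 1 := ⟨t - 1, by omega⟩
  rw [Nat.add_sub_cancel] at hxtmin
  have hsc_le : ∀ k ≤ n + 1, ∀ τ ∈ Icc 1 k, StrongConvexOn X α (ℓ τ) := fun k hk τ hτ ↦
    hsc τ (Icc_subset_Icc_right (hk.trans htT) hτ)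
  have growth_prev := (StrongConvexOn.sum hXconv (hsc_le n n.le_succ)).quadratic_growth_of_isMinOn
    hxt (isMinOn_iff.2 hxtmin) hxt1
  have growth_next := (StrongConvexOn.sum hXconv (hsc_le (n + 1) le_rfl)).quadratic_growth_of_isMinOn
    hxt1 (isMinOn_iff.2 hxt1min) hxt
  simp only [Nat.card_Icc, Nat.add_sub_cancel, sum_Icc_succ_top (Nat.le_add_left 1 n)]
    at growth_prev growth_next
  rw [norm_sub_rev] at growth_prev
  push_cast at growth_next ⊢
  linear_combination growth_prev + growth_next

/-- **FTL one-step strong-convexity bound.**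
If each `ℓ τ` is `α`-strongly convex on the nonempty convex set `X ⊆ ℝ^d`,
`x t ∈ X` minimizes `∑_{τ=1}^{t-1} ℓ τ` over `X` and `x (t+1) ∈ X` minimizes
`∑_{τ=1}^{t} ℓ τ` over `X`, then
`ℓ t (x t) - ℓ t (x (t+1)) ≥ (α/2) (2t - 1) ‖x t - x (t+1)‖²`. -/
theorem ftl_strong_convexity_gap
    {d : ℕ} (X : Set (EuclideanSpace ℝ (Fin d)))
    (hXne : X.Nonempty) (hXconv : Convex ℝ X)
    (α : ℝ) (hα : 0 < α)
    (T : ℕ) (ℓ : ℕ → EuclideanSpace ℝ (Fin d) → ℝ)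
    (hsc : ∀ τ ∈ Finset.Icc 1 T, StrongConvexOn X α (ℓ τ))
    (t : ℕ) (ht1 : 1 ≤ t) (htT : t ≤ T)
    (xt xt1 : EuclideanSpace ℝ (Fin d)) (hxt : xt ∈ X) (hxt1 : xt1 ∈ X)
    (hxtmin : ∀ y ∈ X, ∑ τ ∈ Finset.Icc 1 (t - 1), ℓ τ xt ≤ ∑ τ ∈ Finset.Icc 1 (t - 1), ℓ τ y)
    (hxt1min : ∀ y ∈ X, ∑ τ ∈ Finset.Icc 1 t, ℓ τ xt1 ≤ ∑ τ ∈ Finset.Icc 1 t, ℓ τ y) :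
    α / 2 * (2 * (t : ℝ) - 1) * ‖xt - xt1‖ ^ 2 ≤ ℓ t xt - ℓ t xt1 :=
  ftl_strong_convexity_gap_general X hXconv α T ℓ hsc t ht1 htT xt xt1 hxt hxt1 hxtmin hxt1min
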